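/- arXiv:2310.18135 — 5 statements merged into one kernel-verified Lean document; each statement's English description precedes it below -/
import Mathlib

section
/- If R is a zero-sum-free commutative semiring and p ∈ D_R(U) is a distribution with p(u₀) = 1 for some u₀ (i.e., p is supported by a delta somewhere in a convex combination sense), then for any convex decomposition p = Σ_r d(r)·δ^{r} over elements r with weights d(r) summing to 1, every r with d(r) ≠ 0 satisfies r = u₀. Equivalently: if Σ_r d(r)·δ^{s(r)} equals the delta distribution at u₀, then s(r) = u₀ whenever d(r) ≠ 0. -/
theorem AddUnits.subsingleton_of_add_eq_zero {M : Type*} [AddCommMonoid M]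
    (hzsf : ∀ a b : M, a + b = 0 → a = 0 ∧ b = 0) : Subsingleton (AddUnits M) :=
  Subsingleton.addUnits_of_isAddUnit fun a ha ↦
    let ⟨b, hab⟩ := isAddUnit_iff_exists_neg.mp ha
    (hzsf a b hab).1

theorem Finsupp.apply_eq_zero_of_mapDomain_apply_eq_zero {α β M : Type*} [AddCommMonoid M]
    [Subsingleton (AddUnits M)] {f : α → β} {x : α →₀ M} {a : α}
    (h : x.mapDomain f (f a) = 0) : x a = 0 := by
  classical
  by_contra hxa
  rw [Finsupp.mapDomain_apply_eq_sum, Finset.sum_eq_zero_iff] at h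
  exact hxa (h a (by simpa using hxa))

theorem stmt3_general (R ι U : Type*) [CommSemiring R]
    (hzsf : ∀ a b : R, a + b = 0 → a = 0 ∧ b = 0)
    (d : ι →₀ R)
    (s : ι → U) (u₀ : U)
    (h : Finsupp.mapDomain s d = Finsupp.single u₀ 1) :
    ∀ i : ι, d i ≠ 0 → s i = u₀ := by
  have := AddUnits.subsingleton_of_add_eq_zero hzsf
  intro i hi
  by_contra hne
  refine hi (Finsupp.apply_eq_zero_of_mapDomain_apply_eq_zero (f := s) ?_)
  rw [h, Finsupp.single_eq_of_ne hne]

/-- In a zero-sum-free commutative semiring `R`: if a convex combination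
`∑_i d(i) · δ^{s(i)}` of delta distributions (with weights `d` summing to `1`)
equals the delta distribution at `u₀`, then every `i` with nonzero weight
satisfies `s i = u₀`. -/
theorem stmt3 (R ι U : Type*) [CommSemiring R]
    (hzsf : ∀ a b : R, a + b = 0 → a = 0 ∧ b = 0)
    (d : ι →₀ R) (hd : d.sum (fun _ r => r) = 1)
    (s : ι → U) (u₀ : U)
    (h : Finsupp.mapDomain s d = Finsupp.single u₀ 1) :
    ∀ i : ι, d i ≠ 0 → s i = u₀ :=
  stmt3_general R ι U hzsf d s u₀ h
end

section
/- Let X and Y be simplicial G-sets with trivial G-action on Y. If p : X → D_R(Y) is a G-equivariant simplicial distribution and p is non-contextual in the G-equivariant sense (i.e., lies in the image of Θ_G : D_R(dDist_G(X,Y)) → sDist_G(X,Y)), then the induced simplicial distribution p̃_G : X⫽G → D_R(Y) on the Borel construction is non-contextual; conversely if p̃_G is non-contextual then p is G-equivariantly non-contextual. -/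
open CategoryTheory Simplicial Opposite

/-- `R`-distributions on `U`. -/
def DistR (R : Type) [CommSemiring R] (U : Type*) : Type _ :=
  {p : U →₀ R // p.sum (fun _ r => r) = 1}

noncomputable def DistR.map {R : Type} [CommSemiring R] {U V : Type*}
    (f : U → V) (p : DistR R U) : DistR R V :=
  ⟨Finsupp.mapDomain f p.1,
    (Finsupp.sum_mapDomain_index (fun _ => rfl) (fun _ _ _ => rfl)).trans p.2⟩

theorem DistR.map_id {R : Type} [CommSemiring R] {U : Type*} (p : DistR R U) :
    DistR.map id p = p := by
  apply Subtype.ext; exact Finsupp.mapDomain_id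

theorem DistR.map_comp {R : Type} [CommSemiring R] {U V W : Type*} (f : U → V) (g : V → W)
    (p : DistR R U) : DistR.map (g ∘ f) p = DistR.map g (DistR.map f p) := by
  apply Subtype.ext; exact Finsupp.mapDomain_comp

/-- The simplicial set of `R`-distributions on a simplicial set `Y`. -/
noncomputable def DRobj (R : Type) [CommSemiring R] (Y : SSet.{0}) : SSet.{0} where
  obj n := DistR R (Y.obj n)
  map θ := TypeCat.ofHom (fun p => DistR.map (Y.map θ) p)
  map_id n := by
    ext p
    show DistR.map (Y.map (𝟙 n)) p = p
    rw [Y.map_id]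
    exact DistR.map_id p
  map_comp θ θ' := by
    ext p
    have : DistR.map ((_root_.id Y).map (θ ≫ θ')) p
        = DistR.map (Y.map θ' ∘ Y.map θ) p := by
      congr 1
      ext x
      simp
    simpa using this.trans (DistR.map_comp _ _ p)

/-- The unit `δ : Y → D_R(Y)`, sending a simplex to the delta distribution at it. -/
noncomputable def deltaNat (R : Type) [CommSemiring R] (Y : SSet.{0}) :
    Y ⟶ DRobj R Y where
  app n := TypeCat.ofHom (fun y => ⟨Finsupp.single y 1, by rw [Finsupp.sum_single_index rfl]⟩)
  naturality n m θ := by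
    ext y
    refine Subtype.ext ?_
    show Finsupp.single (Y.map θ y) 1 = Finsupp.mapDomain (Y.map θ) (Finsupp.single y 1)
    exact Finsupp.mapDomain_single.symm

/-- `Θ`: a distribution on the set of simplicial maps `X → Y` yields a simplicial
distribution `X → D_R(Y)`. -/
noncomputable def Theta (R : Type) [CommSemiring R] (X Y : SSet.{0})
    (d : DistR R (X ⟶ Y)) : X ⟶ DRobj R Y where
  app n := TypeCat.ofHom (fun σ => DistR.map (fun s : X ⟶ Y => s.app n σ) d)
  naturality n m θ := by
    ext σ
    apply Subtype.ext
    show Finsupp.mapDomain (fun s : X ⟶ Y => s.app m (X.map θ σ)) d.1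
      = Finsupp.mapDomain (Y.map θ) (Finsupp.mapDomain (fun s : X ⟶ Y => s.app n σ) d.1)
    rw [← Finsupp.mapDomain_comp]
    congr 1
    funext s
    exact (ConcreteCategory.congr_hom (s.naturality θ) σ)

/-- A (left) action of a group `G` on a simplicial set `X` by simplicial automorphisms. -/
structure SAct (G : Type) [Group G] (X : SSet.{0}) where
  act : G → ∀ n : SimplexCategoryᵒᵖ, X.obj n → X.obj n
  one : ∀ n x, act 1 n x = x
  mul : ∀ g h n x, act (g * h) n x = act g n (act h n x)
  nat : ∀ g {n m : SimplexCategoryᵒᵖ} (θ : n ⟶ m) x,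
      X.map θ (act g n x) = act g m (X.map θ x)

variable {G : Type} [Group G] {X : SSet.{0}}

/-- The relation defining the SBorel construction: `(f, x) ∼ g·(f, x)`. -/
def sBorelRel (A : SAct G X) (n : SimplexCategoryᵒᵖ) :
    ((Fin (n.unop.len + 1) → G) × X.obj n) → ((Fin (n.unop.len + 1) → G) × X.obj n) → Prop :=
  fun a b => ∃ g : G, (fun i => g * a.1 i) = b.1 ∧ A.act g n a.2 = b.2

/-- The SBorel construction `X ⫽ G = EG ×_G X`. -/
def SBorel (A : SAct G X) : SSet.{0} where
  obj n := Quot (sBorelRel A n)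
  map {n m} θ := TypeCat.ofHom (Quot.map
    (fun (a : (Fin (n.unop.len + 1) → G) × X.obj n) => (a.1 ∘ θ.unop.toOrderHom, X.map θ a.2))
    (by
      rintro ⟨f, x⟩ ⟨f', x'⟩ ⟨g, hf, hx⟩
      dsimp at hf hx ⊢
      subst hf; subst hx
      exact ⟨g, rfl, (A.nat g θ x).symm⟩))
  map_id n := by
    ext q
    induction q using Quot.ind with
    | _ a =>
      show Quot.mk _ _ = Quot.mk _ a
      congr 1
      refine Prod.ext ?_ ?_
      · funext i
        exact congrArg a.1 (congrFun (congrArg _ (SimplexCategory.id_toOrderHom n.unop)) i)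
      · exact ConcreteCategory.congr_hom (X.map_id n) a.2
  map_comp θ θ' := by
    ext q
    induction q using Quot.ind with
    | _ a =>
      show Quot.mk _ _ = Quot.mk _ _
      congr 1
      refine Prod.ext ?_ ?_
      · funext i
        exact congrArg a.1
          (congrFun (congrArg _ (SimplexCategory.comp_toOrderHom θ'.unop θ.unop)) i)
      · exact ConcreteCategory.congr_hom (X.map_comp θ θ') a.2

/-- The simplicial distribution on the Borel construction induced by a `G`-equivariant
simplicial distribution `p : X → D_R(Y)` (with trivial action on `Y`). -/
noncomputable def tildeDist (R : Type) [CommSemiring R] {Y : SSet.{0}} (A : SAct G X)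
    (p : X ⟶ DRobj R Y)
    (hp : ∀ (g : G) (n : SimplexCategoryᵒᵖ) (x : X.obj n), p.app n (A.act g n x) = p.app n x) :
    SBorel A ⟶ DRobj R Y where
  app n := TypeCat.ofHom (Quot.lift
    (fun (a : (Fin (n.unop.len + 1) → G) × X.obj n) => p.app n a.2) (by
    rintro ⟨f, x⟩ ⟨f', x'⟩ ⟨g, hf, hx⟩
    dsimp at hx ⊢
    rw [← hx, hp]))
  naturality n m θ := by
    ext q
    induction q using Quot.ind with
    | _ a => exact ConcreteCategory.congr_hom (p.naturality θ) a.2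

/-- The map `X ⫽ G → Y` induced by a `G`-equivariant simplicial map `s : X → Y`
(with trivial action on `Y`). -/
def tildeMap {Y : SSet.{0}} (A : SAct G X) (s : X ⟶ Y)
    (hs : ∀ (g : G) (n : SimplexCategoryᵒᵖ) (x : X.obj n), s.app n (A.act g n x) = s.app n x) :
    SBorel A ⟶ Y where
  app n := TypeCat.ofHom (Quot.lift
    (fun (a : (Fin (n.unop.len + 1) → G) × X.obj n) => s.app n a.2) (by
    rintro ⟨f, x⟩ ⟨f', x'⟩ ⟨g, hf, hx⟩
    dsimp at hx ⊢
    rw [← hx, hs]))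
  naturality n m θ := by
    ext q
    induction q using Quot.ind with
    | _ a => exact ConcreteCategory.congr_hom (s.naturality θ) a.2


/-!
A `G`-invariant deterministic `s : X → Y` descends to `X ⫽ G`, which gives one direction.
Conversely, restrict a decomposition of `p̃_G` along `X → X ⫽ G`, `x ↦ [1, x]`; what has to be
shown is that every `t` in its support is `G`-invariant there. Zero-sum-freeness puts `t q` in the
support of `p̃_G q` for every simplex `q`. For `q = [F, σ^* x]` with `σ` a degeneracy we have
`p̃_G q = σ_* p(x)`, so `t q = σ^* u`, and every section `ε` of `σ` gives `t [F ∘ ε, x] = u`.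
With `σ : [2k+1] → [k]`, `i ↦ ⌊i/2⌋`, its sections `i ↦ 2i, 2i+1`, and `F` interleaving two
arbitrary `f, f'`, this shows that `t [f, x]` does not depend on `f`; hence
`t [1, g x] = t [g⁻¹, x] = t [1, x]`.
-/

theorem Finsupp.mapDomain_apply_ne_zero_of_zeroSumFree {R : Type} [CommSemiring R]
    (hzsf : ∀ a b : R, a + b = 0 → a = 0 ∧ b = 0) {U V : Type*} (f : U → V) (p : U →₀ R)
    {u : U} (hu : p u ≠ 0) : Finsupp.mapDomain f p (f u) ≠ 0 := by
  classical
  intro h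
  rw [Finsupp.mapDomain, Finsupp.sum_apply, Finsupp.sum,
    ← Finset.add_sum_erase _ _ (Finsupp.mem_support_iff.mpr hu), Finsupp.single_eq_same] at h
  exact hu (hzsf _ _ h).1

theorem DistR.exists_map_val_eq {R : Type} [CommSemiring R] {U : Type*} {P : U → Prop}
    (d : DistR R U) (hd : ∀ u ∈ d.1.support, P u) :
    ∃ d' : DistR R (Subtype P), DistR.map Subtype.val d' = d := by
  classical
  refine ⟨⟨d.1.subtypeDomain P, (Finsupp.sum_subtypeDomain_index hd).trans d.2⟩, ?_⟩
  apply Subtype.ext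
  change Finsupp.mapDomain Subtype.val (d.1.subtypeDomain P) = d.1
  rw [← Function.Embedding.coe_subtype, ← Finsupp.embDomain_eq_mapDomain,
    ← Finsupp.extendDomain_eq_embDomain_subtype, Finsupp.extendDomain_subtypeDomain _ hd]

theorem Theta_app_mem_support {R : Type} [CommSemiring R]
    (hzsf : ∀ a b : R, a + b = 0 → a = 0 ∧ b = 0) {X Y : SSet.{0}} (d : DistR R (X ⟶ Y))
    {t : X ⟶ Y} (ht : d.1 t ≠ 0) (n : SimplexCategoryᵒᵖ) (x : X.obj n) :
    t.app n x ∈ ((Theta R X Y d).app n x).1.support :=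
  Finsupp.mem_support_iff.mpr (Finsupp.mapDomain_apply_ne_zero_of_zeroSumFree hzsf _ d.1 ht)

theorem Theta_map_precomp {R : Type} [CommSemiring R] {W X Y : SSet.{0}} (φ : W ⟶ X)
    (d : DistR R (X ⟶ Y)) :
    Theta R W Y (DistR.map (fun s => φ ≫ s) d) = φ ≫ Theta R X Y d := by
  ext
  exact (DistR.map_comp _ _ d).symm

namespace SimplexCategory

def halve (k : ℕ) : ⦋2 * k + 1⦌ ⟶ ⦋k⦌ :=
  mkHom ⟨fun i => ⟨i / 2, by omega⟩, fun _ _ h => Nat.div_le_div_right (c := 2) h⟩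

def doubleAdd (k : ℕ) (b : Fin 2) : ⦋k⦌ ⟶ ⦋2 * k + 1⦌ :=
  mkHom ⟨fun i => ⟨2 * i + b, by omega⟩, fun i j h => by
    simp only [Fin.le_def] at h ⊢; omega⟩

theorem doubleAdd_comp_halve (k : ℕ) (b : Fin 2) : doubleAdd k b ≫ halve k = 𝟙 ⦋k⦌ := by
  ext i : 4
  change (2 * (i : ℕ) + b) / 2 = i
  omega

end SimplexCategory

def SBorel.incl (A : SAct G X) : X ⟶ SBorel A where
  app _ := TypeCat.ofHom (fun x => Quot.mk _ (fun _ => 1, x))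
  naturality _ _ _ := rfl

theorem SBorel.incl_comp_tildeDist {R : Type} [CommSemiring R] {Y : SSet.{0}} (A : SAct G X)
    (p : X ⟶ DRobj R Y)
    (hp : ∀ (g : G) (n : SimplexCategoryᵒᵖ) (x : X.obj n), p.app n (A.act g n x) = p.app n x) :
    SBorel.incl A ≫ tildeDist R A p hp = p :=
  rfl

theorem Theta_map_tildeMap {R : Type} [CommSemiring R] {Y : SSet.{0}} (A : SAct G X)
    (d : DistR R {s : X ⟶ Y //
      ∀ (g : G) (n : SimplexCategoryᵒᵖ) (x : X.obj n), s.app n (A.act g n x) = s.app n x})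
    (hp : ∀ (g : G) (n : SimplexCategoryᵒᵖ) (x : X.obj n),
      (Theta R X Y (DistR.map Subtype.val d)).app n (A.act g n x)
        = (Theta R X Y (DistR.map Subtype.val d)).app n x) :
    Theta R (SBorel A) Y (DistR.map (fun s => tildeMap A s.1 s.2) d)
      = tildeDist R A (Theta R X Y (DistR.map Subtype.val d)) hp := by
  ext n q
  induction q using Quot.ind with
  | _ a =>
    change DistR.map _ (DistR.map _ d) = DistR.map _ (DistR.map _ d)
    rw [← DistR.map_comp, ← DistR.map_comp]
    rfl

section SupportOfDecomposition

variable {R : Type} [CommSemiring R] {Y : SSet.{0}} {A : SAct G X}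
  (hzsf : ∀ a b : R, a + b = 0 → a = 0 ∧ b = 0) {p : X ⟶ DRobj R Y}
  {hp : ∀ (g : G) (n : SimplexCategoryᵒᵖ) (x : X.obj n), p.app n (A.act g n x) = p.app n x}
  {d : DistR R (SBorel A ⟶ Y)} (hd : Theta R (SBorel A) Y d = tildeDist R A p hp)
  {t : SBorel A ⟶ Y} (ht : d.1 t ≠ 0)
include hzsf hd ht

theorem SBorel.app_mk_comp_eq_of_comp_eq_id {n m : SimplexCategory} (σ : m ⟶ n)
    {ε ε' : n ⟶ m} (hε : ε ≫ σ = 𝟙 n) (hε' : ε' ≫ σ = 𝟙 n) (F : Fin (m.len + 1) → G)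
    (x : X.obj (op n)) :
    t.app (op n) (Quot.mk _ (F ∘ ε.toOrderHom, x))
      = t.app (op n) (Quot.mk _ (F ∘ ε'.toOrderHom, x)) := by
  classical
  set q : (SBorel A).obj (op m) := Quot.mk _ (F, X.map σ.op x)
  have hq : t.app (op m) q ∈ (Finsupp.mapDomain (Y.map σ.op) (p.app (op n) x).1).support := by
    have h := Theta_app_mem_support hzsf d ht (op m) q
    rwa [hd, show (tildeDist R A p hp).app (op m) q = (DRobj R Y).map σ.op (p.app (op n) x)
      from NatTrans.naturality_apply p σ.op x] at h
  obtain ⟨u, -, hu⟩ := Finset.mem_image.mp (Finsupp.mapDomain_support hq)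
  have face : ∀ ι : n ⟶ m, ι ≫ σ = 𝟙 n →
      t.app (op n) (Quot.mk _ (F ∘ ι.toOrderHom, x)) = u := by
    intro ι hι
    have hx : X.map ι.op (X.map σ.op x) = x := by
      rw [← Functor.map_comp_apply, ← op_comp, hι, op_id, Functor.map_id_apply]
    have hu' : Y.map ι.op (Y.map σ.op u) = u := by
      rw [← Functor.map_comp_apply, ← op_comp, hι, op_id, Functor.map_id_apply]
    calc t.app (op n) (Quot.mk _ (F ∘ ι.toOrderHom, x))
        = t.app (op n) ((SBorel A).map ι.op q) := by rw [← hx]; rfl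
      _ = u := by rw [NatTrans.naturality_apply, ← hu, hu']
  rw [face ε hε, face ε' hε']

theorem SBorel.app_mk_eq_app_mk (n : SimplexCategory) (f f' : Fin (n.len + 1) → G)
    (x : X.obj (op n)) :
    t.app (op n) (Quot.mk _ (f, x)) = t.app (op n) (Quot.mk _ (f', x)) := by
  let g : Fin 2 → Fin (n.len + 1) → G := ![f, f']
  let F : Fin (2 * n.len + 1 + 1) → G :=
    fun i => g ⟨i % 2, by omega⟩ ((SimplexCategory.halve n.len).toOrderHom i)
  have hF : ∀ b, F ∘ (SimplexCategory.doubleAdd n.len b).toOrderHom = g b := by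
    intro b
    funext i
    change g ⟨(2 * i + b) % 2, _⟩ ⟨(2 * i + b) / 2, _⟩ = g b i
    congr 2 <;> omega
  have h := SBorel.app_mk_comp_eq_of_comp_eq_id hzsf hd ht (SimplexCategory.halve n.len)
    (SimplexCategory.doubleAdd_comp_halve n.len 0)
    (SimplexCategory.doubleAdd_comp_halve n.len 1) F x
  rwa [hF, hF] at h

theorem SBorel.incl_comp_app_act (g : G) (n : SimplexCategoryᵒᵖ) (x : X.obj n) :
    (SBorel.incl A ≫ t).app n (A.act g n x) = (SBorel.incl A ≫ t).app n x := by
  have hmk : Quot.mk (sBorelRel A n) (fun _ => 1, A.act g n x) = Quot.mk _ (fun _ => g⁻¹, x) :=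
    Quot.sound ⟨g⁻¹, funext fun _ => mul_one g⁻¹, by rw [← A.mul, inv_mul_cancel, A.one]⟩
  change t.app n (Quot.mk _ _) = t.app n (Quot.mk _ _)
  rw [hmk]
  exact SBorel.app_mk_eq_app_mk hzsf hd ht n.unop _ _ x

end SupportOfDecomposition

/-- A `G`-equivariant simplicial distribution `p : X → D_R(Y)` (trivial action on `Y`) is
`G`-equivariantly non-contextual (it is `Θ_G` of a distribution on the set of
`G`-equivariant deterministic distributions) if and only if the induced simplicial
distribution `p̃_G : X ⫽ G → D_R(Y)` on the Borel construction is non-contextual. -/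
theorem stmt6 (R : Type) [CommSemiring R]
    (hzsf : ∀ a b : R, a + b = 0 → a = 0 ∧ b = 0)
    (G : Type) [Group G] (X Y : SSet.{0}) (A : SAct G X)
    (p : X ⟶ DRobj R Y)
    (hp : ∀ (g : G) (n : SimplexCategoryᵒᵖ) (x : X.obj n), p.app n (A.act g n x) = p.app n x) :
    (∃ d : DistR R {s : X ⟶ Y //
        ∀ (g : G) (n : SimplexCategoryᵒᵖ) (x : X.obj n), s.app n (A.act g n x) = s.app n x},
      Theta R X Y (DistR.map Subtype.val d) = p)
    ↔ (∃ d : DistR R (SBorel A ⟶ Y), Theta R (SBorel A) Y d = tildeDist R A p hp) := by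
  classical
  constructor
  · rintro ⟨d, rfl⟩
    exact ⟨_, Theta_map_tildeMap A d hp⟩
  · rintro ⟨d, hd⟩
    obtain ⟨d', hd'⟩ := DistR.exists_map_val_eq (DistR.map (fun t => SBorel.incl A ≫ t) d)
        (P := fun s => ∀ g n x, s.app n (A.act g n x) = s.app n x) <| by
      intro s hs
      obtain ⟨t, ht, rfl⟩ := Finset.mem_image.mp (Finsupp.mapDomain_support hs)
      exact SBorel.incl_comp_app_act hzsf hd (Finsupp.mem_support_iff.mp ht)
    exact ⟨d', by rw [hd', Theta_map_precomp, hd, SBorel.incl_comp_tildeDist]⟩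
end

section
/- Let Z ⊆ X be a simplicial subset with cofiber X̄ = X/Z, and let A be an abelian group. A simplicial set map r : Z → NA extends to a simplicial set map X → NA if and only if the image ζ([r]) of its cohomology class under the connecting homomorphism ζ : H¹(Z, A) → H²(X̄, A) of the long exact sequence of the cofibration is zero. -/
open CategoryTheory Simplicial Opposite

/-!
Write `r₀` for the extension of `r` by zero. If `f` is a cocycle extending `r`, then `r₀ - f`
is a relative cochain with the same coboundary as `r₀`; conversely, if `δr₀ = δu` with `u`
relative, then `r₀ - u` is a cocycle extending `r`. Normalization comes for free: evaluating the
cocycle identity on the totally degenerate 2-simplex `s₀s₀x` gives `c(s₀x) = 2 c(s₀x)`.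
-/

namespace SSet

variable {A : Type*} [AddCommGroup A] {X : SSet}

lemma δ_σ_zero_σ_zero_apply (i : Fin 3) (x : X _⦋0⦌) : X.δ i (X.σ 0 (X.σ 0 x)) = X.σ 0 x := by
  fin_cases i
  · exact δ_comp_σ_self_apply 0 _
  · exact δ_comp_σ_succ_apply 0 _
  · exact (δ_comp_σ_of_gt_apply (i := 1) (j := 0) (by decide) _).trans
      (congrArg _ (δ_comp_σ_succ_apply 0 x))

def coboundary₁ (c : X _⦋1⦌ → A) (σ : X _⦋2⦌) : A :=
  c (X.δ 1 σ) - c (X.δ 2 σ) - c (X.δ 0 σ)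

lemma coboundary₁_sub (c d : X _⦋1⦌ → A) :
    coboundary₁ (c - d) = coboundary₁ c - coboundary₁ d := by
  funext σ
  simp only [coboundary₁, Pi.sub_apply]
  abel

lemma coboundary₁_eq_zero_iff {c : X _⦋1⦌ → A} :
    coboundary₁ c = 0 ↔ ∀ σ, c (X.δ 1 σ) = c (X.δ 2 σ) + c (X.δ 0 σ) := by
  simp only [funext_iff, coboundary₁, Pi.zero_apply, sub_sub, sub_eq_zero]

lemma apply_σ_zero_eq_zero_of_coboundary₁_eq_zero {c : X _⦋1⦌ → A} (hc : coboundary₁ c = 0)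
    (x : X _⦋0⦌) : c (X.σ 0 x) = 0 := by
  have h := congr_fun hc (X.σ 0 (X.σ 0 x))
  simpa only [coboundary₁, δ_σ_zero_σ_zero_apply, sub_self, zero_sub, neg_eq_zero,
    Pi.zero_apply] using h

end SSet

theorem stmt12_general (A : Type) [AddCommGroup A] (X Z : SSet.{0}) (ι : Z ⟶ X)
    (hinj : ∀ n : SimplexCategoryᵒᵖ, Function.Injective (ι.app n))
    (r : Z _⦋1⦌ → A) :
    (∃ f : X _⦋1⦌ → A,
        (∀ x : X _⦋0⦌, f (X.σ 0 x) = 0) ∧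
        (∀ σ : X _⦋2⦌, f (X.δ 1 σ) = f (X.δ 2 σ) + f (X.δ 0 σ)) ∧
        (∀ z : Z _⦋1⦌, f (ι.app (op ⦋1⦌) z) = r z))
    ↔ (∃ u : X _⦋1⦌ → A,
        (∀ z : Z _⦋1⦌, u (ι.app (op ⦋1⦌) z) = 0) ∧
        (∀ σ : X _⦋2⦌,
          Function.extend (ι.app (op ⦋1⦌)) r (fun _ => 0) (X.δ 1 σ)
            - Function.extend (ι.app (op ⦋1⦌)) r (fun _ => 0) (X.δ 2 σ)
            - Function.extend (ι.app (op ⦋1⦌)) r (fun _ => 0) (X.δ 0 σ)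
          = u (X.δ 1 σ) - u (X.δ 2 σ) - u (X.δ 0 σ))) := by
  set r₀ := Function.extend (ι.app (op ⦋1⦌)) r (fun _ => 0)
  have hr₀ : ∀ z, r₀ (ι.app (op ⦋1⦌) z) = r z := (hinj _).extend_apply r _
  change _ ↔ ∃ u : X _⦋1⦌ → A, (∀ z, u (ι.app (op ⦋1⦌) z) = 0) ∧
    ∀ σ, SSet.coboundary₁ r₀ σ = SSet.coboundary₁ u σ
  constructor
  · rintro ⟨f, -, hf, hfr⟩
    refine ⟨r₀ - f, fun z => by simp [hr₀, hfr], fun σ => ?_⟩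
    rw [SSet.coboundary₁_sub, SSet.coboundary₁_eq_zero_iff.2 hf, sub_zero]
  · rintro ⟨u, hu, hr₀u⟩
    have hf : SSet.coboundary₁ (r₀ - u) = 0 := by
      rw [SSet.coboundary₁_sub, sub_eq_zero]
      exact funext hr₀u
    exact ⟨r₀ - u, SSet.apply_σ_zero_eq_zero_of_coboundary₁_eq_zero hf,
      SSet.coboundary₁_eq_zero_iff.1 hf, fun z => by simp [hr₀, hu]⟩

/-- Let `Z ⊆ X` be a simplicial subset (an inclusion `ι : Z → X`) with cofiber
`X̄ = X/Z`, and `A` an abelian group.  A simplicial set map `r : Z → NA` — encoded,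
via the nerve, by a normalized 1-cocycle `r : Z₁ → A` — extends to a simplicial set map
`X → NA` if and only if the image `ζ([r])` of its class under the connecting
homomorphism `ζ : H¹(Z, A) → H²(X̄, A)` vanishes; concretely, `ζ(r)` is the coboundary
of the extension-by-zero `r̃` of `r`, and `ζ([r]) = 0` iff it is the coboundary of a
relative 1-cochain `u` (one vanishing on `Z₁`). -/
theorem stmt12 (A : Type) [AddCommGroup A] (X Z : SSet.{0}) (ι : Z ⟶ X)
    (hinj : ∀ n : SimplexCategoryᵒᵖ, Function.Injective (ι.app n))
    (r : Z _⦋1⦌ → A)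
    (hrn : ∀ z : Z _⦋0⦌, r (Z.σ 0 z) = 0)
    (hrc : ∀ σ : Z _⦋2⦌, r (Z.δ 1 σ) = r (Z.δ 2 σ) + r (Z.δ 0 σ)) :
    (∃ f : X _⦋1⦌ → A,
        (∀ x : X _⦋0⦌, f (X.σ 0 x) = 0) ∧
        (∀ σ : X _⦋2⦌, f (X.δ 1 σ) = f (X.δ 2 σ) + f (X.δ 0 σ)) ∧
        (∀ z : Z _⦋1⦌, f (ι.app (op ⦋1⦌) z) = r z))
    ↔ (∃ u : X _⦋1⦌ → A,
        (∀ z : Z _⦋1⦌, u (ι.app (op ⦋1⦌) z) = 0) ∧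
        (∀ σ : X _⦋2⦌,
          Function.extend (ι.app (op ⦋1⦌)) r (fun _ => 0) (X.δ 1 σ)
            - Function.extend (ι.app (op ⦋1⦌)) r (fun _ => 0) (X.δ 2 σ)
            - Function.extend (ι.app (op ⦋1⦌)) r (fun _ => 0) (X.δ 0 σ)
          = u (X.δ 1 σ) - u (X.δ 2 σ) - u (X.δ 0 σ))) :=
  stmt12_general A X Z ι hinj r
end

section
/- For a central extension NA → NA ×_β M → M of partial groups classified by a 2-cocycle β : M₂ → A, the following are equivalent: (1) the cohomology class [β] ∈ H²(M, A) is zero; (2) the fiber inclusion i : NA → NA ×_β M admits a retraction; (3) the projection π : NA ×_β M → M admits a simplicial section. -/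
/-!
A simplicial section of `π` is a normalized 1-cochain `s` with `δs = -β`, so (1) ⇔ (3) is
`s ↦ -s`. A retraction `r` of `i` is additive in the fibre: on the degenerate 2-simplex
`σ₀ x`, where `β` vanishes, its defining identity reads `r (a, x) = a + r (0, x)`. Hence
`r (a, x) = a - s x` for a cochain `s`, and the retraction identity becomes `δs = -β`.
-/

open CategoryTheory Simplicial

namespace SSet

variable {A : Type*} [AddCommGroup A] {M : SSet} (pt : M _⦋0⦌) (β : M _⦋2⦌ → A)

lemma δ_two_σ_zero_apply (x : M _⦋1⦌) : M.δ 2 (M.σ 0 x) = M.σ 0 (M.δ 1 x) :=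
  M.δ_comp_σ_of_gt_apply (i := 1) (j := 0) (by decide) x

theorem exists_coboundary_iff_exists_section :
    (∃ s : M _⦋1⦌ → A, s (M.σ 0 pt) = 0 ∧
        ∀ σ : M _⦋2⦌, β σ = s (M.δ 2 σ) + s (M.δ 0 σ) - s (M.δ 1 σ)) ↔
      ∃ s : M _⦋1⦌ → A, s (M.σ 0 pt) = 0 ∧
        ∀ σ : M _⦋2⦌, s (M.δ 1 σ) = s (M.δ 2 σ) + s (M.δ 0 σ) + β σ := by
  constructor
  · rintro ⟨s, hs₀, hs⟩
    refine ⟨-s, by simp [hs₀], fun σ => ?_⟩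
    simp only [Pi.neg_apply]
    linear_combination (norm := abel) -hs σ
  · rintro ⟨s, hs₀, hs⟩
    refine ⟨-s, by simp [hs₀], fun σ => ?_⟩
    simp only [Pi.neg_apply, hs σ]
    abel

variable {pt β}

lemma retraction_apply_eq_add (hred : ∀ x : M _⦋0⦌, x = pt)
    (hβ : ∀ x : M _⦋1⦌, β (M.σ 0 x) = 0) {r : A × M _⦋1⦌ → A}
    (hr₀ : ∀ a : A, r (a, M.σ 0 pt) = a)
    (hr : ∀ (a₁ a₂ : A) (σ : M _⦋2⦌),
      r (a₁ + a₂ + β σ, M.δ 1 σ) = r (a₁, M.δ 2 σ) + r (a₂, M.δ 0 σ))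
    (a : A) (x : M _⦋1⦌) : r (a, x) = a + r (0, x) := by
  have h := hr a 0 (M.σ 0 x)
  rwa [δ_two_σ_zero_apply, hred (M.δ 1 x), hr₀, hβ, add_zero, add_zero,
    M.δ_comp_σ_succ'_apply (j := 1) rfl, M.δ_comp_σ_self'_apply (j := 0) rfl] at h

theorem exists_retraction_iff_exists_section (hred : ∀ x : M _⦋0⦌, x = pt)
    (hβ : ∀ x : M _⦋1⦌, β (M.σ 0 x) = 0) :
    (∃ r : A × M _⦋1⦌ → A, (∀ a : A, r (a, M.σ 0 pt) = a) ∧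
        ∀ (a₁ a₂ : A) (σ : M _⦋2⦌),
          r (a₁ + a₂ + β σ, M.δ 1 σ) = r (a₁, M.δ 2 σ) + r (a₂, M.δ 0 σ)) ↔
      ∃ s : M _⦋1⦌ → A, s (M.σ 0 pt) = 0 ∧
        ∀ σ : M _⦋2⦌, s (M.δ 1 σ) = s (M.δ 2 σ) + s (M.δ 0 σ) + β σ := by
  constructor
  · rintro ⟨r, hr₀, hr⟩
    have hadd := retraction_apply_eq_add hred hβ hr₀ hr
    refine ⟨fun x => -r (0, x), by simp [hr₀], fun σ => ?_⟩
    have h := hr 0 0 σ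
    rw [hadd] at h
    dsimp only
    linear_combination (norm := abel) -h
  · rintro ⟨s, hs₀, hs⟩
    refine ⟨fun p => p.1 - s p.2, fun a => by simp [hs₀], fun a₁ a₂ σ => ?_⟩
    dsimp only
    linear_combination (norm := abel) -hs σ

end SSet

theorem stmt15_general (A : Type) [AddCommGroup A] (M : SSet.{0})
    (pt : M _⦋0⦌) (hred : ∀ x : M _⦋0⦌, x = pt)
    (β : M _⦋2⦌ → A)
    (hβdeg : ∀ x : M _⦋1⦌, β (M.σ 0 x) = 0 ∧ β (M.σ 1 x) = 0) :
    ((∃ s : M _⦋1⦌ → A, s (M.σ 0 pt) = 0 ∧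
        ∀ σ : M _⦋2⦌, β σ = s (M.δ 2 σ) + s (M.δ 0 σ) - s (M.δ 1 σ))
      ↔ (∃ s : M _⦋1⦌ → A, s (M.σ 0 pt) = 0 ∧
        ∀ σ : M _⦋2⦌, s (M.δ 1 σ) = s (M.δ 2 σ) + s (M.δ 0 σ) + β σ)) ∧
    ((∃ r : A × M _⦋1⦌ → A,
        (∀ a : A, r (a, M.σ 0 pt) = a) ∧
        ∀ (a₁ a₂ : A) (σ : M _⦋2⦌),
          r (a₁ + a₂ + β σ, M.δ 1 σ) = r (a₁, M.δ 2 σ) + r (a₂, M.δ 0 σ))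
      ↔ (∃ s : M _⦋1⦌ → A, s (M.σ 0 pt) = 0 ∧
        ∀ σ : M _⦋2⦌, s (M.δ 1 σ) = s (M.δ 2 σ) + s (M.δ 0 σ) + β σ)) :=
  ⟨SSet.exists_coboundary_iff_exists_section pt β,
    SSet.exists_retraction_iff_exists_section hred fun x => (hβdeg x).1⟩

/-- For a central partial group extension `NA → NA ×_β M → M` of a partial group `M`
(a reduced simplicial set) by a finite abelian group `A`, classified by a normalized
2-cocycle `β : M₂ → A`, the following are equivalent:
(1) `[β] = 0` in `H²(M, A)`, i.e. `β` is the coboundary of a normalized 1-cochain;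
(2) the fiber inclusion `i : NA → NA ×_β M` splits, i.e. there is a retraction — by the
determination of maps into nerves by their 1-simplices, a function
`r : A × M₁ → A` with `r(a, 1) = a` and `r(a₁ + a₂ + β σ, d₁σ) = r(a₁, d₂σ) + r(a₂, d₀σ)`;
(3) the projection `π : NA ×_β M → M` splits, i.e. there is a simplicial section — a
normalized `s : M₁ → A` with `s(d₁σ) = s(d₂σ) + s(d₀σ) + β σ`. -/
theorem stmt15 (A : Type) [AddCommGroup A] [Fintype A] (M : SSet.{0})
    (pt : M _⦋0⦌) (hred : ∀ x : M _⦋0⦌, x = pt)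
    (β : M _⦋2⦌ → A)
    (hβdeg : ∀ x : M _⦋1⦌, β (M.σ 0 x) = 0 ∧ β (M.σ 1 x) = 0)
    (hβcoc : ∀ τ : M _⦋3⦌, β (M.δ 1 τ) + β (M.δ 3 τ) = β (M.δ 0 τ) + β (M.δ 2 τ)) :
    ((∃ s : M _⦋1⦌ → A, s (M.σ 0 pt) = 0 ∧
        ∀ σ : M _⦋2⦌, β σ = s (M.δ 2 σ) + s (M.δ 0 σ) - s (M.δ 1 σ))
      ↔ (∃ s : M _⦋1⦌ → A, s (M.σ 0 pt) = 0 ∧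
        ∀ σ : M _⦋2⦌, s (M.δ 1 σ) = s (M.δ 2 σ) + s (M.δ 0 σ) + β σ)) ∧
    ((∃ r : A × M _⦋1⦌ → A,
        (∀ a : A, r (a, M.σ 0 pt) = a) ∧
        ∀ (a₁ a₂ : A) (σ : M _⦋2⦌),
          r (a₁ + a₂ + β σ, M.δ 1 σ) = r (a₁, M.δ 2 σ) + r (a₂, M.δ 0 σ))
      ↔ (∃ s : M _⦋1⦌ → A, s (M.σ 0 pt) = 0 ∧
        ∀ σ : M _⦋2⦌, s (M.δ 1 σ) = s (M.δ 2 σ) + s (M.δ 0 σ) + β σ)) :=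
  stmt15_general A M pt hred β hβdeg
end

section
/- With notation as in the central extension NA → E →^π M with cocycle β, G-action giving Φ : G × M₁ → A, and pseudo-section η : M → E, η(x) = (0,x): there exists a function s : M₁ → A with d^h s = Φ (i.e., Φ_g(x) = s(g⁻¹·x) − s(x) up to coboundary) if and only if π admits a G-equivariant pseudo-section; moreover the cohomology class of Φ is independent of the choice of pseudo-section η. -/
/-!
Writing every pseudo-section as `λ_α(x) = (α x, x)`, the `A`-equivariance of the first
coordinate makes `Φ^α` equal to `Φ^0` plus the horizontal coboundary of `α`, and `λ_α` is
`G`-equivariant exactly when `Φ^α` vanishes, i.e. when `Φ^0 = d^h(-α)`.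
-/

section PseudoSection

variable {G A M : Type*} [Group G] [AddCommGroup A] [MulAction G M]
  (act : G → A × M → A × M)

/-- `Φ^α_g(x)`, the first coordinate of `(g · λ_α(g⁻¹ · x)) · λ_α(x)⁻¹` for the pseudo-section
`λ_α(x) = (α x, x)`. -/
def pseudoSectionCocycle (α : M → A) (g : G) (x : M) : A :=
  (act g (α (g⁻¹ • x), g⁻¹ • x)).1 - α x

variable {act}

theorem pseudoSectionCocycle_eq
    (hfst : ∀ (g : G) (a : A) (m : M), (act g (a, m)).1 = a + (act g (0, m)).1)
    (α : M → A) (g : G) (x : M) :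
    pseudoSectionCocycle act α g x = (act g (0, g⁻¹ • x)).1 + (α (g⁻¹ • x) - α x) := by
  rw [pseudoSectionCocycle, hfst]
  abel

theorem pseudoSectionCocycle_eq_add_coboundary
    (hfst : ∀ (g : G) (a : A) (m : M), (act g (a, m)).1 = a + (act g (0, m)).1)
    (α₁ α₂ : M → A) (g : G) (x : M) :
    pseudoSectionCocycle act α₂ g x =
      pseudoSectionCocycle act α₁ g x + ((α₂ - α₁) (g⁻¹ • x) - (α₂ - α₁) x) := by
  rw [pseudoSectionCocycle_eq hfst, pseudoSectionCocycle_eq hfst, Pi.sub_apply, Pi.sub_apply]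
  abel

theorem pseudoSectionCocycle_eq_zero_iff
    (hfst : ∀ (g : G) (a : A) (m : M), (act g (a, m)).1 = a + (act g (0, m)).1)
    (α : M → A) (g : G) (x : M) :
    pseudoSectionCocycle act α g x = 0 ↔
      (act g (0, g⁻¹ • x)).1 = (-α) (g⁻¹ • x) - (-α) x := by
  rw [pseudoSectionCocycle_eq hfst, add_eq_zero_iff_eq_neg, neg_sub, Pi.neg_apply, Pi.neg_apply,
    neg_sub_neg]

theorem act_pseudoSection_eq_iff
    (hsnd : ∀ (g : G) (a : A) (m : M), (act g (a, m)).2 = g • m)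
    (α : M → A) (g : G) (x : M) :
    act g (α (g⁻¹ • x), g⁻¹ • x) = (α x, x) ↔ pseudoSectionCocycle act α g x = 0 := by
  rw [Prod.ext_iff, hsnd, smul_inv_smul, pseudoSectionCocycle, sub_eq_zero]
  exact and_iff_left rfl

end PseudoSection

theorem stmt18_general (G A M₁ : Type) [Group G] [AddCommGroup A] [MulAction G M₁]
    (act : G → A × M₁ → A × M₁)
    (hsnd : ∀ (g : G) (a : A) (m : M₁), (act g (a, m)).2 = g • m)
    (hfst : ∀ (g : G) (a : A) (m : M₁), (act g (a, m)).1 = a + (act g (0, m)).1) :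
    (∀ α₁ α₂ : M₁ → A, ∃ α : M₁ → A, ∀ (g : G) (x : M₁),
        ((act g (α₂ (g⁻¹ • x), g⁻¹ • x)).1 - α₂ x)
          = ((act g (α₁ (g⁻¹ • x), g⁻¹ • x)).1 - α₁ x) + (α (g⁻¹ • x) - α x)) ∧
    ((∃ s : M₁ → A, ∀ (g : G) (x : M₁),
        (act g ((0 : A), g⁻¹ • x)).1 = s (g⁻¹ • x) - s x)
      ↔ (∃ α : M₁ → A, ∀ (g : G) (x : M₁),
          act g (α (g⁻¹ • x), g⁻¹ • x) = (α x, x))) := by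
  have equivariant_iff (α : M₁ → A) (g : G) (x : M₁) :
      act g (α (g⁻¹ • x), g⁻¹ • x) = (α x, x) ↔
        (act g (0, g⁻¹ • x)).1 = (-α) (g⁻¹ • x) - (-α) x :=
    (act_pseudoSection_eq_iff hsnd α g x).trans (pseudoSectionCocycle_eq_zero_iff hfst α g x)
  refine ⟨fun α₁ α₂ => ⟨α₂ - α₁, pseudoSectionCocycle_eq_add_coboundary hfst α₁ α₂⟩, ?_, ?_⟩
  · rintro ⟨s, hs⟩
    refine ⟨-s, fun g x => (equivariant_iff (-s) g x).2 ?_⟩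
    rw [neg_neg]
    exact hs g x
  · rintro ⟨α, hα⟩
    exact ⟨-α, fun g x => (equivariant_iff α g x).1 (hα g x)⟩

/-- Let `NA → E →^π M` be a central partial group extension with `E₁ = A × M₁` and
`π` the second projection, and let `G` act on `E` by automorphisms fixing `NA` and
commuting with the `NA`-action (so that the second coordinate of `g • (a, m)` is `g • m`
and the first coordinate is `a`-equivariant).  Pseudo-sections of `π` correspond to
functions `α : M₁ → A`, `λ_α(x) = (α x, x)`, and the associated cocycle is
`Φ^α_g(x) = (g·λ_α(g⁻¹·x))·λ_α(x)⁻¹ = fst(g • (α(g⁻¹·x), g⁻¹·x)) − α x`.  Then: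
(1) the cohomology class of `Φ^α` is independent of the choice of pseudo-section (any two
differ by a horizontal coboundary), and (2) there is `s : M₁ → A` with `d^h s = Φ`
(for the pseudo-section `η(x) = (0, x)`) if and only if `π` admits a `G`-equivariant
pseudo-section. -/
theorem stmt18 (G A M₁ : Type) [Group G] [AddCommGroup A] [MulAction G M₁]
    (act : G → A × M₁ → A × M₁)
    (hone : ∀ p : A × M₁, act 1 p = p)
    (hmul : ∀ (g h : G) (p : A × M₁), act (g * h) p = act g (act h p))
    (hsnd : ∀ (g : G) (a : A) (m : M₁), (act g (a, m)).2 = g • m)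
    (hfst : ∀ (g : G) (a : A) (m : M₁), (act g (a, m)).1 = a + (act g (0, m)).1) :
    (∀ α₁ α₂ : M₁ → A, ∃ α : M₁ → A, ∀ (g : G) (x : M₁),
        ((act g (α₂ (g⁻¹ • x), g⁻¹ • x)).1 - α₂ x)
          = ((act g (α₁ (g⁻¹ • x), g⁻¹ • x)).1 - α₁ x) + (α (g⁻¹ • x) - α x)) ∧
    ((∃ s : M₁ → A, ∀ (g : G) (x : M₁),
        (act g ((0 : A), g⁻¹ • x)).1 = s (g⁻¹ • x) - s x)
      ↔ (∃ α : M₁ → A, ∀ (g : G) (x : M₁),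
          act g (α (g⁻¹ • x), g⁻¹ • x) = (α x, x))) :=
  stmt18_general G A M₁ act hsnd hfst
end
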